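/- Let C_0 = {(log|z_1|,…,log|z_n|) : |z_1|² + ⋯ + |z_n|² < 1} ⊂ ℝⁿ and let f, g be convex functions on C_0 increasing in each variable, with f = g = 0 on ∂C_0, and such that along every half-line of the form {(x_1+t,…,x_{j−1}+t, x_j, x_{j+1}+t,…,x_n+t) : t → −∞} the functions f and g stay bounded below (f and g are finite where only some coordinates tend to −∞). Then the following are equivalent: (1) lim_{c→+∞} P_{C_0}(f, g+c) = f almost everywhere on C_0; (2) for each a ∈ C_0 and each b ∈ ℕⁿ with strictly positive entries, lim_{t→−∞} f(a+tb)/t ≥ lim_{t→−∞} g(a+tb)/t. -/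

import Mathlib

/-!
Along a ray `t ↦ a + t b` with `b ≥ 0` the secant slopes of a convex increasing function decrease
to a finite limit as `t → -∞`; for `b` with positive entries this limit does not depend on `a`.

If in such a direction the slope of `f` is below `M` and that of `g` above `M`, convexity of a
competitor `u ≤ min(f, g + c)` along the ray through `y` gives `u y ≤ f (y + τ b) - M τ` for
`τ > 0` and every `c`; for a suitable `τ` this bound is below `f y` on a nonempty open set.

Conversely, take an affine minorant `l + c` of `f` at `x` (Hahn–Banach); its slopes dominate
those of `f`, hence those of `g`, in all integer directions. Since integer directions of a bounded
grid approximate every direction from above, monotonicity of `g` gives `l y + ε ∑ yᵢ ≤ g y + c'`,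
so `l + c + ε ∑ yᵢ` is a competitor for `P(f, g + c'')` whose value at `x` is almost `f x`.
-/

open Filter MeasureTheory Metric Set
open scoped ENNReal Topology

noncomputable section

/-- The logarithmic image of the unit ball:
`C₀ = {(log|z₁|,…,log|zₙ|) : Σ|zᵢ|² < 1} = {x : Σ e^{2xᵢ} < 1}`. -/
def C0 (n : ℕ) : Set (Fin n → ℝ) := {x | ∑ i, Real.exp (2 * x i) < 1}

/-- The convex envelope `P_{C₀}(f, g+c)(x)`: the supremum at `x` of all convex functions on
`C₀` lying below `min(f, g+c)` on `C₀`. -/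
def convEnv (n : ℕ) (f g : (Fin n → ℝ) → ℝ) (c : ℝ) (x : Fin n → ℝ) : EReal :=
  ⨆ (u : (Fin n → ℝ) → ℝ) (_ : ConvexOn ℝ (C0 n) u ∧
      ∀ y ∈ C0 n, u y ≤ min (f y) (g y + c)), ((u x : ℝ) : EReal)

/-- The slope at infinity of `h` along the ray `t ↦ a + t b`, `t → -∞`
(for convex `h` the `limsup` is an honest limit). -/
def raySlope (n : ℕ) (h : (Fin n → ℝ) → ℝ) (a b : Fin n → ℝ) : EReal :=
  Filter.limsup (fun t : ℝ => ((h (a + t • b) / t : ℝ) : EReal)) atBot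

lemma isOpen_C0 (n : ℕ) : IsOpen (C0 n) :=
  isOpen_lt (continuous_finsetSum _ fun i _ => by fun_prop) continuous_const

lemma convex_C0 (n : ℕ) : Convex ℝ (C0 n) := by
  have hexp (i : Fin n) : ConvexOn ℝ univ fun x : Fin n → ℝ => Real.exp (2 * x i) := by
    simpa [Function.comp_def] using
      convexOn_exp.comp_linearMap ((2 : ℝ) • LinearMap.proj (R := ℝ) (φ := fun _ : Fin n => ℝ) i)
  have hsum : ConvexOn ℝ univ fun x : Fin n → ℝ => ∑ i, Real.exp (2 * x i) := by
    simpa [Finset.sum_fn] using Finset.sum_induction (fun i (x : Fin n → ℝ) => Real.exp (2 * x i))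
      (ConvexOn ℝ univ) (fun _ _ => ConvexOn.add) (convexOn_const 0 convex_univ) fun i _ => hexp i
  simpa [C0] using hsum.convex_lt 1

lemma isLowerSet_C0 (n : ℕ) : IsLowerSet (C0 n) := fun x _ hyx hx =>
  (Finset.sum_le_sum fun i _ => Real.exp_le_exp.2 (by linarith [hyx i])).trans_lt hx

lemma C0_subset_Iic_zero (n : ℕ) : C0 n ⊆ Iic 0 := fun x hx i => by
  have : Real.exp (2 * x i) < 1 :=
    (Finset.single_le_sum (fun j _ => (Real.exp_pos (2 * x j)).le) (Finset.mem_univ i)).trans_lt hx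
  have := Real.exp_lt_one_iff.1 this
  show x i ≤ 0
  linarith

section OneVariable

variable {φ : ℝ → ℝ}

lemma tendsto_comp_add_div_atBot {L : ℝ} (hφ : Tendsto (fun t => φ t / t) atBot (𝓝 L)) (S : ℝ) :
    Tendsto (fun t => φ (t + S) / t) atBot (𝓝 L) := by
  have hratio : Tendsto (fun t : ℝ => (t + S) / t) atBot (𝓝 1) := by
    have := (tendsto_const_nhds (x := (1 : ℝ))).add
      (tendsto_const_nhds (x := S).div_atBot tendsto_id)
    rw [add_zero] at this
    refine this.congr' ?_
    filter_upwards [eventually_lt_atBot 0] with t ht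
    rw [id, add_div, div_self ht.ne]
  have := (hφ.comp (tendsto_atBot_add_const_right _ S tendsto_id)).mul hratio
  rw [mul_one] at this
  refine this.congr' ?_
  filter_upwards [eventually_lt_atBot (-S)] with t ht
  exact div_mul_div_cancel₀ (show t + S ≠ 0 by linarith)

lemma ConvexOn.exists_tendsto_div_atBot (hconv : ConvexOn ℝ (Iic 0) φ)
    (hmono : MonotoneOn φ (Iic 0)) : ∃ L, Tendsto (fun t => φ t / t) atBot (𝓝 L) := by
  -- freezing the secant slopes from `0` at `t = -1` makes them monotone on all of `ℝ`
  set ψ : ℝ → ℝ := fun t => slope φ 0 (min t (-1))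
  have hmem (t : ℝ) : min t (-1) ∈ Iic (0 : ℝ) \ {0} :=
    ⟨by simp, by simp only [mem_singleton_iff]; linarith [min_le_right t (-1)]⟩
  have hψ : Monotone ψ := fun t t' htt' =>
    hconv.slope_mono self_mem_Iic (hmem t) (hmem t') (min_le_min_right _ htt')
  have hbdd : BddBelow (range ψ) := by
    refine ⟨0, ?_⟩
    rintro _ ⟨t, rfl⟩
    have hneg : min t (-1) < 0 := by linarith [min_le_right t (-1)]
    simp only [ψ, slope_def_field, sub_zero]
    exact div_nonneg_of_nonpos (by linarith [hmono hneg.le self_mem_Iic hneg.le]) hneg.le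
  refine ⟨⨅ t, ψ t, ?_⟩
  have := (tendsto_atBot_ciInf hψ hbdd).add (tendsto_const_nhds (x := φ 0).div_atBot tendsto_id)
  rw [add_zero] at this
  refine this.congr' ?_
  filter_upwards [eventually_le_atBot (-1)] with t ht
  simp only [ψ, id, min_eq_left ht, slope_def_field, sub_zero]
  ring

lemma ConvexOn.le_slope_of_eventually_le {a b M C : ℝ} (hφ : ConvexOn ℝ (Iic b) φ) (hab : a < b)
    (hle : ∀ᶠ t in atBot, φ t ≤ M * t + C) : M ≤ slope φ a b := by
  have hlim : Tendsto (fun t => (φ b - M * t - C) / (b - t)) atBot (𝓝 M) := by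
    have hden : Tendsto (fun t : ℝ => b - t) atBot atTop := by
      simpa [sub_eq_add_neg] using tendsto_atTop_add_const_left _ b tendsto_neg_atBot_atTop
    have := (tendsto_const_nhds (x := M)).add
      ((tendsto_const_nhds (x := φ b - C - M * b)).div_atTop hden)
    rw [add_zero] at this
    refine this.congr' ?_
    filter_upwards [eventually_lt_atBot b] with t ht
    field_simp [(sub_pos.2 ht).ne']
    ring
  refine le_of_tendsto hlim ?_
  filter_upwards [hle, eventually_lt_atBot a] with t ht hta
  calc (φ b - M * t - C) / (b - t) ≤ slope φ t b := by
        rw [slope_def_field]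
        exact div_le_div_of_nonneg_right (by linarith) (by linarith)
    _ ≤ slope φ a b := by
        rw [slope_comm, slope_comm φ a]
        exact hφ.slope_mono self_mem_Iic ⟨(hta.trans hab).le, (hta.trans hab).ne⟩
          ⟨hab.le, hab.ne⟩ hta.le

end OneVariable

lemma ConvexOn.comp_add_smul {E : Type*} [AddCommGroup E] [Module ℝ E] {s : Set E} {f : E → ℝ}
    (hf : ConvexOn ℝ s f) (x b : E) :
    ConvexOn ℝ ((fun t : ℝ => x + t • b) ⁻¹' s) fun t => f (x + t • b) := by
  have hline : ⇑(AffineMap.lineMap (k := ℝ) x (x + b)) = fun t : ℝ => x + t • b := by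
    ext t
    simp [AffineMap.lineMap_apply, add_comm]
  simpa [hline, Function.comp_def] using hf.comp_affineMap (AffineMap.lineMap x (x + b))

section Rays

variable {ι : Type*} {s : Set (ι → ℝ)} {h : (ι → ℝ) → ℝ} {x b : ι → ℝ}

lemma IsLowerSet.add_smul_mem (hs : IsLowerSet s) (hx : x ∈ s) (hb : 0 ≤ b) {t : ℝ}
    (ht : t ≤ 0) : x + t • b ∈ s :=
  hs (add_le_of_nonpos_right (smul_nonpos_of_nonpos_of_nonneg ht hb)) hx

lemma exists_tendsto_ray_div_atBot (hs : IsLowerSet s) (hconv : ConvexOn ℝ s h)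
    (hmono : MonotoneOn h s) (hx : x ∈ s) (hb : 0 ≤ b) :
    ∃ L, Tendsto (fun t => h (x + t • b) / t) atBot (𝓝 L) := by
  refine ConvexOn.exists_tendsto_div_atBot ((hconv.comp_add_smul x b).subset
    (fun t ht => hs.add_smul_mem hx hb ht) (convex_Iic 0)) fun t ht t' ht' htt' => ?_
  exact hmono (hs.add_smul_mem hx hb ht) (hs.add_smul_mem hx hb ht')
    (add_le_add_right (smul_le_smul_of_nonneg_right htt' hb) x)

lemma tendsto_ray_div_atBot_of_base [Finite ι] (hs : IsLowerSet s) (hmono : MonotoneOn h s)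
    {a : ι → ℝ} (ha : a ∈ s) (hx : x ∈ s) (hb : ∀ i, 0 < b i) {L : ℝ}
    (hL : Tendsto (fun t => h (a + t • b) / t) atBot (𝓝 L)) :
    Tendsto (fun t => h (x + t • b) / t) atBot (𝓝 L) := by
  -- `x` is squeezed between two points of the ray through `a`: `a - S b ≤ x ≤ a + S b`
  obtain ⟨S, hS⟩ := Finite.bddAbove_range fun i => |x i - a i| / b i
  have hdist (i : ι) : |x i - a i| ≤ S * b i := (div_le_iff₀ (hb i)).1 (hS ⟨i, rfl⟩)
  have hb0 : 0 ≤ b := fun i => (hb i).le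
  have hshift := tendsto_comp_add_div_atBot hL
  refine tendsto_of_tendsto_of_tendsto_of_le_of_le' (hshift S) (hshift (-S)) ?_ ?_
  · filter_upwards [eventually_le_atBot (-S), eventually_lt_atBot 0] with t htS ht
    refine div_le_div_of_nonpos_of_le ht.le (hmono (hs.add_smul_mem hx hb0 ht.le)
      (hs.add_smul_mem ha hb0 (by linarith)) fun i => ?_)
    simp only [Pi.add_apply, Pi.smul_apply, smul_eq_mul, add_mul]
    linarith [hdist i, le_abs_self (x i - a i)]
  · filter_upwards [eventually_le_atBot S, eventually_lt_atBot 0] with t htS ht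
    refine div_le_div_of_nonpos_of_le ht.le (hmono (hs.add_smul_mem ha hb0 (by linarith))
      (hs.add_smul_mem hx hb0 ht.le) fun i => ?_)
    simp only [Pi.add_apply, Pi.smul_apply, smul_eq_mul, add_mul, neg_mul]
    linarith [hdist i, neg_abs_le (x i - a i)]

end Rays

section RaySlope

variable {n : ℕ} {h : (Fin n → ℝ) → ℝ} {x b : Fin n → ℝ}

lemma raySlope_eq_of_tendsto {L : ℝ} (hL : Tendsto (fun t => h (x + t • b) / t) atBot (𝓝 L)) :
    raySlope n h x b = L :=
  ((continuous_coe_real_ereal.tendsto L).comp hL).limsup_eq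

lemma eventually_div_lt_of_raySlope_lt {M : ℝ} (hM : raySlope n h x b < M) :
    ∀ᶠ t in atBot, h (x + t • b) / t < M := by
  filter_upwards [eventually_lt_of_limsup_lt hM] with t ht using EReal.coe_lt_coe_iff.1 ht

lemma raySlope_le_of_affine_le (l : (Fin n → ℝ) →L[ℝ] ℝ) (c : ℝ)
    (hle : ∀ t : ℝ, t ≤ 0 → l (x + t • b) + c ≤ h (x + t • b)) : raySlope n h x b ≤ l b := by
  have hlim : Tendsto (fun t => l b + (l x + c) / t) atBot (𝓝 (l b)) := by
    simpa using (tendsto_const_nhds (x := l b)).add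
      ((tendsto_const_nhds (x := l x + c)).div_atBot tendsto_id)
  rw [← ((continuous_coe_real_ereal.tendsto _).comp hlim).limsup_eq]
  refine limsup_le_limsup ?_
  filter_upwards [eventually_lt_atBot 0] with t ht
  have hlt := hle t ht.le
  rw [map_add, map_smul, smul_eq_mul] at hlt
  simp only [Function.comp, EReal.coe_le_coe_iff]
  rw [div_le_iff_of_neg ht, add_mul, div_mul_cancel₀ _ ht.ne]
  linarith

end RaySlope

lemma ConvexOn.exists_affine_le_of_lt_of_isOpen {E : Type*} [NormedAddCommGroup E]
    [NormedSpace ℝ E] {s : Set E} {f : E → ℝ} {x : E} {a : ℝ} (hf : ConvexOn ℝ s f)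
    (hcont : ContinuousOn f s) (hs : IsOpen s) (hx : x ∈ s) (hax : a < f x) :
    ∃ (l : E →L[ℝ] ℝ) (c : ℝ), (∀ y ∈ s, l y + c ≤ f y) ∧ l x + c = a := by
  set S : Set (E × ℝ) := {p | p.1 ∈ s ∧ f p.1 < p.2}
  have hSopen : IsOpen S := by
    have := (hcont.comp continuous_fst.continuousOn fun p hp => hp).sub continuous_snd.continuousOn
      |>.isOpen_inter_preimage (hs.preimage continuous_fst) (isOpen_Iio (a := 0))
    convert this using 1
    ext p
    exact and_congr_right fun _ => sub_neg.symm
  obtain ⟨φ, hφ⟩ := geometric_hahn_banach_open_point hf.convex_strict_epigraph hSopen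
    fun h : (x, a) ∈ S => lt_asymm hax h.2
  set β := φ (0, 1)
  have hsplit (y : E) (r : ℝ) : φ (y, r) = φ (y, 0) + r * β := by
    have : (y, r) = (y, 0) + r • ((0 : E), (1 : ℝ)) := by simp
    rw [this, map_add, map_smul, smul_eq_mul]
  have hsep (y : E) (hy : y ∈ s) (r : ℝ) (hr : f y < r) :
      φ (y, 0) + r * β < φ (x, 0) + a * β := by
    have := hφ (y, r) ⟨hy, hr⟩
    rwa [hsplit y r, hsplit x a] at this
  have hβ : 0 < -β := by
    have := hsep x hx (f x + 1) (by linarith)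
    nlinarith
  refine ⟨(-β)⁻¹ • φ.comp (ContinuousLinearMap.inl ℝ E ℝ), a - (-β)⁻¹ * φ (x, 0),
    fun y hy => le_of_forall_gt_imp_ge_of_dense fun r hr => ?_, by simp⟩
  have hsep := hsep y hy r hr
  have : (-β)⁻¹ * φ (y, 0) - (-β)⁻¹ * φ (x, 0) ≤ r - a := by
    rw [← mul_sub, inv_mul_le_iff₀ hβ]
    linarith
  simp only [FunLike.coe_smul, ContinuousLinearMap.coe_comp, Function.comp_apply,
    ContinuousLinearMap.inl_apply, Pi.smul_apply, smul_eq_mul]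
  linarith

section LowerBound

variable {ι : Type*} {s : Set (ι → ℝ)} {g : (ι → ℝ) → ℝ} {x : ι → ℝ} {l : (ι → ℝ) →L[ℝ] ℝ}

lemma monotone_of_affine_le (hs : IsLowerSet s) (hmono : MonotoneOn g s) (hx : x ∈ s) {c : ℝ}
    (hle : ∀ y ∈ s, l y + c ≤ g y) : Monotone l := by
  intro v w hvw
  by_contra! hlt
  -- along `x - N (w - v)` the minorant grows like `N (l v - l w)` while `g` stays below `g x`
  obtain ⟨N, hN⟩ := exists_nat_gt ((g x - l x - c) / (l v - l w))
  have hy : x - (N : ℝ) • (w - v) ≤ x :=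
    sub_le_self x (smul_nonneg N.cast_nonneg (sub_nonneg.2 hvw))
  have := (hle _ (hs hy hx)).trans (hmono (hs hy hx) hx hy)
  rw [map_sub, map_smul, map_sub, smul_eq_mul] at this
  rw [div_lt_iff₀ (sub_pos.2 hlt)] at hN
  linarith

lemma neg_linear_le_of_nat_vec (hs : IsLowerSet s) (hx : x ∈ s) (hmono : MonotoneOn g s)
    (hl : Monotone l) {v : ι → ℝ} (hv : 0 ≤ v) {R : ℝ} (hR : 0 < R) {N : ℕ} (hN : 0 < N)
    {k : ι → ℕ} (hk : ∀ i, N / R * v i ≤ k i ∧ (k i : ℝ) ≤ N / R * v i + 2)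
    (hgk : g (x + (-R / N) • fun i => (k i : ℝ)) / (-R / N) < l (fun i => (k i : ℝ)) + 1) :
    -l v - R * (2 * l 1 + 1) / N ≤ g (x - v) := by
  set kR : ι → ℝ := fun i => k i
  set t := -R / N
  have hNpos : (0 : ℝ) < N := Nat.cast_pos.2 hN
  have ht : t < 0 := div_neg_of_neg_of_pos (neg_neg_of_pos hR) hNpos
  have hlk : R * l kR ≤ N * l v + 2 * R * l 1 := by
    have : l kR ≤ l ((N / R) • v + (2 : ℝ) • 1) := hl fun i => by simpa using (hk i).2
    rw [map_add, map_smul, map_smul, smul_eq_mul, smul_eq_mul] at this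
    have := mul_le_mul_of_nonneg_left this hR.le
    rw [mul_add, ← mul_assoc, mul_div_cancel₀ _ hR.ne'] at this
    linarith
  have hray : x + t • kR ≤ x - v := by
    rw [sub_eq_add_neg]
    refine add_le_add_right (fun i => ?_) x
    calc t * kR i ≤ t * (N / R * v i) := mul_le_mul_of_nonpos_left (hk i).1 ht.le
      _ = -v i := by simp only [t]; field_simp
  calc -l v - R * (2 * l 1 + 1) / N ≤ (l kR + 1) * t := by
        rw [show (l kR + 1) * t = -(R * l kR + R) / N by ring, le_div_iff₀ hNpos, sub_mul,
          div_mul_cancel₀ _ hNpos.ne']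
        linarith
    _ ≤ g (x + t • kR) := ((div_lt_iff_of_neg ht).1 hgk).le
    _ ≤ g (x - v) := hmono (hs.add_smul_mem hx (fun i => (k i).cast_nonneg) ht.le)
        (hs (sub_le_self x hv) hx) hray

lemma exists_nat_vec_btwn (N : ℕ) {w : ι → ℝ} (hw0 : 0 ≤ w) (hwN : ∀ i, w i ≤ N) :
    ∃ k : ι → ℕ, (∀ i, k i ∈ Finset.Icc 1 (N + 1)) ∧ ∀ i, w i ≤ k i ∧ (k i : ℝ) ≤ w i + 2 := by
  refine ⟨fun i => ⌈w i⌉₊ + 1, fun i => ?_, fun i => ⟨?_, ?_⟩⟩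
  · have := Nat.ceil_le.2 (hwN i)
    simp only [Finset.mem_Icc]
    omega
  · push_cast
    linarith [Nat.le_ceil (w i)]
  · push_cast
    linarith [Nat.ceil_lt_add_one (hw0 i)]

variable [Fintype ι]

lemma exists_neg_linear_le_of_sum_ge (hs : IsLowerSet s) (hx : x ∈ s) (hmono : MonotoneOn g s)
    (hl : Monotone l)
    (hslope : ∀ k : ι → ℕ, (∀ i, 0 < k i) → ∀ M, l (fun i => (k i : ℝ)) < M →
      ∀ᶠ t in atBot, g (x + t • fun i => (k i : ℝ)) / t < M)
    {ε : ℝ} (hε : 0 < ε) :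
    ∃ R₀, ∀ v, 0 ≤ v → R₀ ≤ ∑ i, v i → -l v - ε * ∑ i, v i ≤ g (x - v) := by
  classical
  -- approximating the direction `N v / ∑ vᵢ` from above by an integer vector of a fixed finite
  -- grid makes the slope hypothesis uniform in the direction of `v`
  have hP : 0 ≤ l 1 := by simpa using hl (zero_le_one' (ι → ℝ))
  obtain ⟨N, hN⟩ := exists_nat_gt ((2 * l 1 + 1) / ε)
  have hNpos : 0 < N := Nat.cast_pos.1 (lt_of_le_of_lt (by positivity) hN)
  rw [div_lt_iff₀ hε] at hN
  set G := Fintype.piFinset fun _ : ι => Finset.Icc 1 (N + 1)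
  have hev : ∀ᶠ t in atBot,
      ∀ k ∈ G, g (x + t • fun i => (k i : ℝ)) / t < l (fun i => (k i : ℝ)) + 1 := by
    refine (eventually_all_finset G).2 fun k hk => hslope k (fun i => ?_) _ (lt_add_one _)
    have := Fintype.mem_piFinset.1 hk i
    simp only [Finset.mem_Icc] at this
    omega
  obtain ⟨T, hT⟩ := eventually_atBot.1 hev
  refine ⟨max 1 (-N * T), fun v hv hR => ?_⟩
  set R := ∑ i, v i
  have hRpos : 0 < R := one_pos.trans_le ((le_max_left _ _).trans hR)
  obtain ⟨k, hkG, hk⟩ := exists_nat_vec_btwn N (w := fun i => N / R * v i)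
    (fun i => mul_nonneg (by positivity) (hv i)) fun i => by
      rw [div_mul_eq_mul_div, div_le_iff₀ hRpos]
      exact mul_le_mul_of_nonneg_left (Finset.single_le_sum (fun j _ => hv j) (Finset.mem_univ i))
        N.cast_nonneg
  have ht : -R / N ≤ T := by
    rw [div_le_iff₀ (Nat.cast_pos.2 hNpos)]
    linarith [le_max_right 1 (-N * T)]
  have hfar := neg_linear_le_of_nat_vec hs hx hmono hl hv hRpos hNpos hk
    (hT _ ht k (Fintype.mem_piFinset.2 hkG))
  have : R * (2 * l 1 + 1) / N ≤ ε * R := by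
    rw [div_le_iff₀ (Nat.cast_pos.2 hNpos)]
    nlinarith
  linarith

lemma exists_linear_le_add_const (hs : IsLowerSet s) (hs0 : s ⊆ Iic 0) (hx : x ∈ s)
    (hmono : MonotoneOn g s) (hl : Monotone l)
    (hslope : ∀ k : ι → ℕ, (∀ i, 0 < k i) → ∀ M, l (fun i => (k i : ℝ)) < M →
      ∀ᶠ t in atBot, g (x + t • fun i => (k i : ℝ)) / t < M)
    {ε : ℝ} (hε : 0 < ε) : ∃ c, ∀ y ∈ s, l y + ε * ∑ i, y i ≤ g y + c := by
  obtain ⟨R₀, hR₀⟩ := exists_neg_linear_le_of_sum_ge hs hx hmono hl hslope hε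
  refine ⟨max 0 (-g (x - R₀ • 1)), fun y hy => ?_⟩
  -- compare `y` with `y ⊓ x = x - v`, which lies on the cone below `x`
  set v := x - y ⊓ x
  have hv : 0 ≤ v := sub_nonneg.2 inf_le_right
  have hxv : x - v = y ⊓ x := sub_sub_cancel x _
  have hlv : 0 ≤ l v := by simpa using hl hv
  have hsumv : 0 ≤ ∑ i, v i := Finset.sum_nonneg fun i _ => hv i
  have hcone : -l v - ε * ∑ i, v i ≤ g (y ⊓ x) + max 0 (-g (x - R₀ • 1)) := by
    by_cases hR : R₀ ≤ ∑ i, v i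
    · linarith [hxv ▸ hR₀ v hv hR, le_max_left 0 (-g (x - R₀ • 1))]
    · have hvR : v ≤ R₀ • 1 := fun i => by
        simpa using
          (Finset.single_le_sum (fun j _ => hv j) (Finset.mem_univ i)).trans (not_le.1 hR).le
      have hle : x - R₀ • 1 ≤ y ⊓ x := hxv ▸ sub_le_sub_left hvR x
      have := hmono (hs hle (hs inf_le_left hy)) (hs inf_le_left hy) hle
      nlinarith [le_max_right 0 (-g (x - R₀ • 1))]
  have hsup : y + v = y ⊔ x := by
    rw [eq_sub_of_add_eq' (inf_add_sup y x), add_sub_assoc]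
  have hsup0 : y + v ≤ 0 := hsup ▸ sup_le (hs0 hy) (hs0 hx)
  have h1 : l (y + v) ≤ 0 := by simpa using hl hsup0
  have h2 : ε * ∑ i, (y + v) i ≤ 0 :=
    mul_nonpos_of_nonneg_of_nonpos hε.le (Finset.sum_nonpos fun i _ => hsup0 i)
  have h3 : g (y ⊓ x) ≤ g y := hmono (hs inf_le_left hy) hy inf_le_left
  simp only [map_add, Pi.add_apply, Finset.sum_add_distrib, mul_add] at h1 h2
  linarith

end LowerBound

section ConvexEnvelope

variable {n : ℕ} {f g : (Fin n → ℝ) → ℝ}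

lemma convEnv_le_self {x : Fin n → ℝ} (hx : x ∈ C0 n) (c : ℝ) : convEnv n f g c x ≤ f x :=
  iSup₂_le fun _ hu => EReal.coe_le_coe_iff.2 ((hu.2 x hx).trans (min_le_left _ _))

lemma convEnv_le_of_eventually_le {y b : Fin n → ℝ} {τ M : ℝ} (hτ : 0 < τ) (hb : 0 ≤ b)
    (hyτ : y + τ • b ∈ C0 n) (hg : ∀ᶠ t in atBot, g (y + t • b) ≤ M * t) (c : ℝ) :
    convEnv n f g c y ≤ ((f (y + τ • b) - M * τ : ℝ) : EReal) := by
  refine iSup₂_le fun u ⟨hu, hle⟩ => EReal.coe_le_coe_iff.2 ?_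
  have hmem (t : ℝ) (ht : t ≤ τ) : y + t • b ∈ C0 n := by
    have := (isLowerSet_C0 n).add_smul_mem hyτ hb (sub_nonpos.2 ht)
    rwa [add_assoc, ← add_smul, add_sub_cancel] at this
  have hray : ConvexOn ℝ (Iic τ) fun t => u (y + t • b) := (hu.comp_add_smul y b).subset hmem
    (convex_Iic τ)
  have hslope := hray.le_slope_of_eventually_le hτ (C := c) <| by
    filter_upwards [hg, eventually_le_atBot τ] with t hgt ht
    linarith [(hle _ (hmem t ht)).trans (min_le_right _ _)]
  rw [slope_def_field, sub_zero, le_div_iff₀ hτ] at hslope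
  have := (hle _ hyτ).trans (min_le_left _ _)
  simp only [zero_smul, add_zero] at hslope
  linarith

lemma not_tendsto_convEnv_of_lt {y b : Fin n → ℝ} {τ M : ℝ} (hτ : 0 < τ) (hb : 0 ≤ b)
    (hyτ : y + τ • b ∈ C0 n) (hg : ∀ᶠ t in atBot, g (y + t • b) ≤ M * t)
    (hlt : f (y + τ • b) - M * τ < f y) :
    ¬Tendsto (fun c : ℝ => convEnv n f g c y) atTop (𝓝 ((f y : ℝ) : EReal)) := fun htend =>
  (EReal.coe_le_coe_iff.1 (le_of_tendsto' htend (convEnv_le_of_eventually_le hτ hb hyτ hg))).not_gt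
    hlt

lemma raySlope_le_of_ae_tendsto_convEnv (hf : ConvexOn ℝ (C0 n) f) (hg : ConvexOn ℝ (C0 n) g)
    (hfmono : MonotoneOn f (C0 n)) (hgmono : MonotoneOn g (C0 n))
    (hae : ∀ᵐ x ∂(volume.restrict (C0 n)),
      Tendsto (fun c : ℝ => convEnv n f g c x) atTop (𝓝 ((f x : ℝ) : EReal)))
    {a : Fin n → ℝ} (ha : a ∈ C0 n) {b : Fin n → ℝ} (hb : ∀ i, 0 < b i) :
    raySlope n g a b ≤ raySlope n f a b := by
  have hb0 : 0 ≤ b := fun i => (hb i).le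
  obtain ⟨Lf, hLf⟩ := exists_tendsto_ray_div_atBot (isLowerSet_C0 n) hf hfmono ha hb0
  obtain ⟨Lg, hLg⟩ := exists_tendsto_ray_div_atBot (isLowerSet_C0 n) hg hgmono ha hb0
  rw [raySlope_eq_of_tendsto hLf, raySlope_eq_of_tendsto hLg, EReal.coe_le_coe_iff]
  by_contra! hlt
  obtain ⟨M, hLfM, hMLg⟩ := exists_between hlt
  have hsec : Tendsto (fun t => f (a + t • b) / t - f a / t) atBot (𝓝 (Lf - 0)) :=
    hLf.sub ((tendsto_const_nhds (x := f a)).div_atBot tendsto_id)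
  obtain ⟨t, hft, ht⟩ :=
    ((hsec.eventually (gt_mem_nhds (by simpa using hLfM))).and (eventually_lt_atBot 0)).exists
  rw [← sub_div, div_lt_iff_of_neg ht] at hft
  set τ := -t
  have hτ : 0 < τ := neg_pos.2 ht
  set V := C0 n ∩ (fun y => y + τ • b) ⁻¹' C0 n
  have hVopen : IsOpen V :=
    (isOpen_C0 n).inter ((isOpen_C0 n).preimage (continuous_id.add continuous_const))
  have hfcont := hf.continuousOn (isOpen_C0 n)
  set U := V ∩ (fun y => f (y + τ • b) - M * τ - f y) ⁻¹' Iio 0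
  have hUopen : IsOpen U := by
    refine ContinuousOn.isOpen_inter_preimage ?_ hVopen isOpen_Iio
    refine ((hfcont.comp (continuous_id.add continuous_const).continuousOn fun y hy => hy.2).sub
      continuousOn_const).sub (hfcont.mono inter_subset_left)
  have hzU : a + t • b ∈ U := by
    have hza : a + t • b + τ • b = a := by simp [τ, add_assoc]
    refine ⟨⟨(isLowerSet_C0 n).add_smul_mem ha hb0 ht.le, by simpa [hza] using ha⟩, ?_⟩
    simp only [mem_preimage, mem_Iio, hza, τ]
    linarith
  have hbad (y : Fin n → ℝ) (hyU : y ∈ U) :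
      ¬Tendsto (fun c : ℝ => convEnv n f g c y) atTop (𝓝 ((f y : ℝ) : EReal)) := by
    refine not_tendsto_convEnv_of_lt hτ hb0 hyU.1.2 ?_ (sub_neg.1 hyU.2)
    filter_upwards [(tendsto_ray_div_atBot_of_base (isLowerSet_C0 n) hgmono ha hyU.1.1 hb hLg)
      |>.eventually (lt_mem_nhds hMLg), eventually_lt_atBot 0] with s hs hs0
    exact ((lt_div_iff_of_neg hs0).1 hs).le
  obtain ⟨y, hyp, hyU⟩ :=
    (Measure.dense_of_ae ((ae_restrict_iff' (isOpen_C0 n).measurableSet).1 hae)).exists_mem_open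
      hUopen ⟨_, hzU⟩
  exact hbad y hyU (hyp hyU.1.1)

lemma tendsto_convEnv_of_raySlope_le (hf : ConvexOn ℝ (C0 n) f) (hfmono : MonotoneOn f (C0 n))
    (hgmono : MonotoneOn g (C0 n)) {x : Fin n → ℝ} (hx : x ∈ C0 n)
    (hslope : ∀ b : Fin n → ℕ, (∀ i, 0 < b i) →
      raySlope n g x (fun i => (b i : ℝ)) ≤ raySlope n f x (fun i => (b i : ℝ))) :
    Tendsto (fun c : ℝ => convEnv n f g c x) atTop (𝓝 ((f x : ℝ) : EReal)) := by
  refine tendsto_order.2 ⟨fun A hA => ?_, fun B hB => .of_forall fun c =>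
    (convEnv_le_self hx c).trans_lt hB⟩
  obtain ⟨r, hAr, hrf⟩ := EReal.lt_iff_exists_real_btwn.1 hA
  rw [EReal.coe_lt_coe_iff] at hrf
  obtain ⟨l, c, hle, hlx⟩ := hf.exists_affine_le_of_lt_of_isOpen (hf.continuousOn (isOpen_C0 n))
    (isOpen_C0 n) hx (a := (r + f x) / 2) (by linarith)
  have hl : Monotone l := monotone_of_affine_le (isLowerSet_C0 n) hfmono hx hle
  have hlslope (k : Fin n → ℕ) (hk : ∀ i, 0 < k i) (M : ℝ) (hM : l (fun i => (k i : ℝ)) < M) :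
      ∀ᶠ t in atBot, g (x + t • fun i => (k i : ℝ)) / t < M := by
    refine eventually_div_lt_of_raySlope_lt ((hslope k hk).trans_lt ?_)
    refine (raySlope_le_of_affine_le l c fun t ht => hle _ ?_).trans_lt (EReal.coe_lt_coe_iff.2 hM)
    exact (isLowerSet_C0 n).add_smul_mem hx (fun i => (k i).cast_nonneg) ht
  have hεlim : Tendsto (fun ε : ℝ => l x + c + ε * ∑ i, x i) (𝓝[>] 0) (𝓝 (l x + c)) := by
    refine (Continuous.tendsto' ?_ 0 _ (by simp)).mono_left nhdsWithin_le_nhds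
    fun_prop
  obtain ⟨ε, hεx, hε⟩ :=
    ((hεlim.eventually (lt_mem_nhds (show r < l x + c by linarith))).and self_mem_nhdsWithin).exists
  obtain ⟨c', hc'⟩ := exists_linear_le_add_const (isLowerSet_C0 n) (C0_subset_Iic_zero n) hx
    hgmono hl hlslope hε
  have hm : ConvexOn ℝ (C0 n) fun y => l y + c + ε * ∑ i, y i := by
    refine ⟨convex_C0 n, fun y _ z _ α β _ _ hαβ => le_of_eq ?_⟩
    simp only [map_add, map_smul, Pi.add_apply, Pi.smul_apply, smul_eq_mul,
      Finset.sum_add_distrib, ← Finset.mul_sum]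
    linear_combination c * hαβ.symm
  filter_upwards [eventually_ge_atTop (c' + c)] with d hd
  refine hAr.trans ((EReal.coe_lt_coe_iff.2 hεx).trans_le (le_iSup₂_of_le _ ⟨hm, fun y hy =>
    le_min ?_ ?_⟩ le_rfl))
  · have : ε * ∑ i, y i ≤ 0 := mul_nonpos_of_nonneg_of_nonpos hε.le
      (Finset.sum_nonpos fun i _ => C0_subset_Iic_zero n hy i)
    linarith [hle y hy]
  · linarith [hc' y hy]

end ConvexEnvelope

theorem convEnv_tendsto_iff_raySlope_general (n : ℕ) (f g : (Fin n → ℝ) → ℝ)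
    (hfconv : ConvexOn ℝ (C0 n) f) (hgconv : ConvexOn ℝ (C0 n) g)
    (hfmono : ∀ x ∈ C0 n, ∀ y ∈ C0 n, (∀ i, x i ≤ y i) → f x ≤ f y)
    (hgmono : ∀ x ∈ C0 n, ∀ y ∈ C0 n, (∀ i, x i ≤ y i) → g x ≤ g y) :
    (∀ᵐ x ∂(volume.restrict (C0 n)),
        Tendsto (fun c : ℝ => convEnv n f g c x) atTop (𝓝 ((f x : ℝ) : EReal)))
      ↔ (∀ a ∈ C0 n, ∀ b : Fin n → ℕ, (∀ i, 0 < b i) →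
          raySlope n g a (fun i => (b i : ℝ)) ≤ raySlope n f a (fun i => (b i : ℝ))) := by
  have hfmono' : MonotoneOn f (C0 n) := fun x hx y hy hxy => hfmono x hx y hy hxy
  have hgmono' : MonotoneOn g (C0 n) := fun x hx y hy hxy => hgmono x hx y hy hxy
  refine ⟨fun hae a ha b hb => ?_, fun hslope => ?_⟩
  · exact raySlope_le_of_ae_tendsto_convEnv hfconv hgconv hfmono' hgmono' hae ha
      fun i => Nat.cast_pos.2 (hb i)
  · exact ae_restrict_of_forall_mem (isOpen_C0 n).measurableSet fun x hx =>
      tendsto_convEnv_of_raySlope_le hfconv hfmono' hgmono' hx (hslope x hx)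

/-- Let `f, g` be convex functions on `C₀` increasing in each variable, with
boundary values `0` and finite along the rays where only some coordinates go to `-∞`.  Then
`lim_{c→∞} P_{C₀}(f,g+c) = f` a.e. on `C₀` iff `lim_{t→-∞} f(a+tb)/t ≥ lim_{t→-∞} g(a+tb)/t`
for all `a ∈ C₀` and all `b ∈ ℕⁿ` with positive entries. -/
theorem convEnv_tendsto_iff_raySlope (n : ℕ) (f g : (Fin n → ℝ) → ℝ)
    (hfconv : ConvexOn ℝ (C0 n) f) (hgconv : ConvexOn ℝ (C0 n) g)
    (hfmono : ∀ x ∈ C0 n, ∀ y ∈ C0 n, (∀ i, x i ≤ y i) → f x ≤ f y)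
    (hgmono : ∀ x ∈ C0 n, ∀ y ∈ C0 n, (∀ i, x i ≤ y i) → g x ≤ g y)
    (hfbd : ∀ x ∈ frontier (C0 n), Tendsto f (𝓝[C0 n] x) (𝓝 (0 : ℝ)))
    (hgbd : ∀ x ∈ frontier (C0 n), Tendsto g (𝓝[C0 n] x) (𝓝 (0 : ℝ)))
    (hfpole : ∀ x ∈ C0 n, ∀ j : Fin n, ∃ M : ℝ, ∀ t : ℝ, t ≤ 0 →
      M ≤ f (fun i => if i = j then x i else x i + t))
    (hgpole : ∀ x ∈ C0 n, ∀ j : Fin n, ∃ M : ℝ, ∀ t : ℝ, t ≤ 0 →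
      M ≤ g (fun i => if i = j then x i else x i + t)) :
    (∀ᵐ x ∂(volume.restrict (C0 n)),
        Tendsto (fun c : ℝ => convEnv n f g c x) atTop (𝓝 ((f x : ℝ) : EReal)))
      ↔ (∀ a ∈ C0 n, ∀ b : Fin n → ℕ, (∀ i, 0 < b i) →
          raySlope n g a (fun i => (b i : ℝ)) ≤ raySlope n f a (fun i => (b i : ℝ))) :=
  convEnv_tendsto_iff_raySlope_general n f g hfconv hgconv hfmono hgmono

end
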